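/- arXiv:1708.00691 — 3 statements merged into one kernel-verified Lean document; each statement's English description precedes it below -/
import Mathlib

section
/- Let n ≥ 1, let p ∈ S_n, and let c ⊆ {1,...,n} be a cycle of p of length t ≥ 1 (i.e., an orbit of p of cardinality t). Write c = {x_1,...,x_t} with p(x_j) = x_{j+1} for j < t and p(x_t) = x_1. Let a = ⌊t/3⌋ and define r ∈ S_n by r(x_j) = x_{j+a} for 1 ≤ j ≤ a, r(x_j) = x_{j-a} for a+1 ≤ j ≤ 2a, and r(x) = x otherwise. If a ≥ 1, then d_H(p∘r, r∘p) = 3/n, where d_H is the normalized Hamming distance. -/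
/-- the normalized Hamming distance on `S_n`. -/
noncomputable def hdist {n : ℕ} (p q : Equiv.Perm (Fin n)) : ℝ :=
  ((Finset.univ.filter fun i => p i ≠ q i).card : ℝ) / n

/-- the permutation `r` supported on a cycle `c = {x_0,...,x_{t-1}}` of `p`,
swapping the blocks `x_0..x_{a-1}` and `x_a..x_{2a-1}` (with `a = ⌊t/3⌋ ≥ 1`),
satisfies `d_H(p∘r, r∘p) = 3/n`. -/
theorem stmt4 (n t : ℕ) (hn : 1 ≤ n) (ht : 1 ≤ t) (p r : Equiv.Perm (Fin n))
    (x : ℕ → Fin n)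
    (hinj : ∀ j < t, ∀ j' < t, x j = x j' → j = j')
    (hcyc : ∀ j, p (x j) = x (j + 1)) (hper : x t = x 0)
    (a : ℕ) (ha : a = t / 3) (ha1 : 1 ≤ a)
    (hr1 : ∀ j < a, r (x j) = x (j + a))
    (hr2 : ∀ j, a ≤ j → j < 2 * a → r (x j) = x (j - a))
    (hr3 : ∀ j, 2 * a ≤ j → j < t → r (x j) = x j)
    (hr4 : ∀ y : Fin n, (∀ j < t, y ≠ x j) → r y = y) :
    hdist (p * r) (r * p) = 3 / n := by
  have h3a : 3 * a ≤ t := by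
    have := Nat.div_mul_le_self t 3; omega
  have h2a : 2 * a < t := by omega
  have hxne : ∀ j < t, ∀ j' < t, j ≠ j' → x j ≠ x j' :=
    fun j hj j' hj' hne he => hne (hinj j hj j' hj' he)
  -- outside the cycle, p∘r and r∘p agree
  have hout : ∀ y : Fin n, (∀ j < t, y ≠ x j) → (p * r) y = (r * p) y := by
    intro y hy
    have hpy : ∀ j < t, p y ≠ x j := by
      intro j hj he
      rcases Nat.eq_zero_or_pos j with rfl | hj1
      · have : p (x (t - 1)) = x 0 := by
          have := hcyc (t - 1)
          rwa [show t - 1 + 1 = t by omega, hper] at this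
        exact hy (t - 1) (by omega) (p.injective (he.trans this.symm))
      · have : p (x (j - 1)) = x j := by
          have := hcyc (j - 1); rwa [show j - 1 + 1 = j by omega] at this
        exact hy (j - 1) (by omega) (p.injective (he.trans this.symm))
    simp only [Equiv.Perm.mul_apply]
    rw [hr4 y hy, hr4 (p y) hpy]
  have hset : (Finset.univ.filter fun i => (p * r) i ≠ (r * p) i)
      = {x (a - 1), x (2 * a - 1), x (t - 1)} := by
    ext y
    simp only [Finset.mem_filter, Finset.mem_univ, true_and, Finset.mem_insert,
      Finset.mem_singleton]
    constructor
    · intro hy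
      by_cases hc : ∃ j, j < t ∧ y = x j
      · obtain ⟨j, hj, rfl⟩ := hc
        by_contra hne
        push_neg at hne
        obtain ⟨h1, h2, h3⟩ := hne
        have hj1 : j ≠ a - 1 := fun h => h1 (by rw [h])
        have hj2 : j ≠ 2 * a - 1 := fun h => h2 (by rw [h])
        have hj3 : j ≠ t - 1 := fun h => h3 (by rw [h])
        apply hy
        simp only [Equiv.Perm.mul_apply]
        rcases lt_or_ge j a with h | h
        · -- j < a, j+1 < a
          rw [hr1 j h, hcyc, hcyc, hr1 (j + 1) (by omega)]
          congr 1; omega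
        · rcases lt_or_ge j (2 * a) with h' | h'
          · rw [hr2 j h h', hcyc, hcyc, hr2 (j + 1) (by omega) (by omega)]
            congr 1; omega
          · rw [hr3 j h' hj, hcyc, hr3 (j + 1) (by omega) (by omega)]
      · push_neg at hc
        exact absurd (hout y fun j hj => hc j hj) hy
    · rintro (rfl | rfl | rfl)
      · simp only [Equiv.Perm.mul_apply]
        rw [hr1 (a - 1) (by omega), hcyc, hcyc,
          show a - 1 + 1 = a from by omega, hr2 a le_rfl (by omega),
          show a - 1 + a + 1 = 2 * a from by omega, Nat.sub_self]
        exact hxne (2 * a) h2a 0 (by omega) (by omega)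
      · simp only [Equiv.Perm.mul_apply]
        rw [hr2 (2 * a - 1) (by omega) (by omega), hcyc, hcyc,
          show 2 * a - 1 + 1 = 2 * a from by omega, hr3 (2 * a) le_rfl h2a,
          show 2 * a - 1 - a + 1 = a from by omega]
        exact hxne a (by omega) (2 * a) h2a (by omega)
      · simp only [Equiv.Perm.mul_apply]
        rw [hr3 (t - 1) (by omega) (by omega), hcyc,
          show t - 1 + 1 = t from by omega, hper, hr1 0 (by omega)]
        exact hxne 0 (by omega) (0 + a) (by omega) (by omega)
  have hcard : (Finset.univ.filter fun i => (p * r) i ≠ (r * p) i).card = 3 := by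
    rw [hset]
    rw [Finset.card_insert_of_notMem, Finset.card_insert_of_notMem,
      Finset.card_singleton]
    · simp only [Finset.mem_singleton]
      exact hxne (2 * a - 1) (by omega) (t - 1) (by omega) (by omega)
    · simp only [Finset.mem_insert, Finset.mem_singleton]
      push_neg
      exact ⟨hxne (a - 1) (by omega) (2 * a - 1) (by omega) (by omega),
        hxne (a - 1) (by omega) (t - 1) (by omega) (by omega)⟩
  rw [hdist, hcard]
  norm_num
end

section
/- Let n ≥ 1, p ∈ S_n an n-cycle, and let c be the full cycle {1,...,n} (so t = n, a = ⌊n/3⌋ ≥ 1). With r defined as r(x_j) = x_{j+a} for 1 ≤ j ≤ a, r(x_j) = x_{j-a} for a+1 ≤ j ≤ 2a, r(x) = x otherwise (where x_j = p^{j-1}(x_1)), every permutation q ∈ S_n commuting with p satisfies d_H(q, r) ≥ 2a/n. -/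
/-!
Since `p` is an `n`-cycle, any `q` commuting with `p` is a power `p ^ k`, i.e. it shifts the
orbit `x₀, x₁, …` by `k` places. On the three blocks `[0, a)`, `[a, 2a)`, `[2a, n)` the
permutation `r` shifts by `a`, `-a` and `0` respectively; these shifts are pairwise distinct
modulo `n`, so `q` agrees with `r` on at most one block. The other two blocks, each of size at
least `a`, lie in the set where `q` and `r` differ.
-/

open Finset

section General

variable {α : Type*} {n : ℕ} {p q : Equiv.Perm α} {x : ℕ → α}

theorem apply_orbit_of_commute (hcyc : ∀ j, p (x j) = x (j + 1)) (hq : Commute p q) {k : ℕ}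
    (hk : q (x 0) = x k) (j : ℕ) : q (x j) = x (j + k) := by
  induction j with
  | zero => rw [hk, zero_add]
  | succ j ih =>
    rw [← hcyc, ← Equiv.Perm.mul_apply, ← hq.eq, Equiv.Perm.mul_apply, ih, hcyc]
    ring_nf

theorem le_card_filter_ne [Fintype α] [DecidableEq α] {r : Equiv.Perm α}
    (hx : Set.InjOn x (Set.Iio n)) {lo hi : ℕ}
    (hagree : ∀ j < n, q (x j) = r (x j) → j ∈ Ico lo hi) :
    n - (hi - lo) ≤ #{i | q i ≠ r i} :=
  calc n - (hi - lo) = #(range n) - #(Ico lo hi) := by simp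
    _ ≤ #(range n \ Ico lo hi) := le_card_sdiff _ _
    _ ≤ #{i | q i ≠ r i} := by
      refine card_le_card_of_injOn x (fun j hj ↦ ?_) (hx.mono fun j hj ↦ ?_)
      · obtain ⟨hjn, hjI⟩ := mem_sdiff.mp hj
        simpa using mt (hagree j (mem_range.mp hjn)) hjI
      · exact mem_range.mp (mem_sdiff.mp hj).1

end General

section FullCycle

variable {n : ℕ} {p : Equiv.Perm (Fin n)} {x : ℕ → Fin n}

theorem orbit_injOn (hsurj : ∀ y, ∃ j < n, x j = y) : Set.InjOn x (Set.Iio n) := by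
  have hbij : Function.Injective fun i : Fin n ↦ x i :=
    Finite.injective_iff_surjective.mpr fun y ↦
      let ⟨j, hj, hxj⟩ := hsurj y
      ⟨⟨j, hj⟩, hxj⟩
  intro i hi j hj hij
  exact congrArg Fin.val (@hbij ⟨i, hi⟩ ⟨j, hj⟩ hij)

theorem orbit_periodic (hcyc : ∀ j, p (x j) = x (j + 1)) (hsurj : ∀ y, ∃ j < n, x j = y) :
    Function.Periodic x n := by
  have hn : 0 < n := (x 0).pos
  have hxn : x n = x 0 := by
    obtain ⟨j, hj, hxj⟩ := hsurj (x n)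
    cases j with
    | zero => exact hxj.symm
    | succ j =>
      have hprev : x (n - 1) = x j :=
        p.injective (by rw [hcyc, hcyc, Nat.sub_add_cancel hn, hxj])
      have := orbit_injOn hsurj (by simp; omega) (by simp; omega) hprev
      omega
  intro i
  induction i with
  | zero => rw [zero_add, hxn]
  | succ i ih => rw [add_right_comm, ← hcyc, ih, hcyc]

theorem orbit_eq_iff_modEq (hcyc : ∀ j, p (x j) = x (j + 1)) (hsurj : ∀ y, ∃ j < n, x j = y)
    {u v : ℕ} : x u = x v ↔ u ≡ v [MOD n] := by
  have hn : 0 < n := (x 0).pos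
  have hper := orbit_periodic hcyc hsurj
  rw [← hper.map_mod_nat u, ← hper.map_mod_nat v]
  exact (orbit_injOn hsurj).eq_iff (Nat.mod_lt _ hn) (Nat.mod_lt _ hn)

end FullCycle

theorem exists_Ico_of_blockwise_shift {n a k : ℕ} {P : ℕ → Prop} (h3a : 3 * a ≤ n)
    (hA : ∀ j < a, P j → k = a)
    (hB : ∀ j, a ≤ j → j < 2 * a → P j → a + k ≡ 0 [MOD n])
    (hC : ∀ j, 2 * a ≤ j → j < n → P j → k = 0) :
    ∃ lo hi, hi - lo ≤ n - 2 * a ∧ ∀ j < n, P j → j ∈ Ico lo hi := by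
  have not_B : k ≤ a → ∀ j, a ≤ j → j < 2 * a → ¬ P j := fun hka j hj₁ hj₂ hP ↦ by
    have h := hB j hj₁ hj₂ hP
    rw [Nat.ModEq, Nat.mod_eq_of_lt (by omega), Nat.zero_mod] at h
    omega
  by_cases hk0 : k = 0
  · refine ⟨2 * a, n, by omega, fun j hj hP ↦ mem_Ico.mpr ⟨?_, hj⟩⟩
    by_contra hlt
    by_cases hja : j < a
    · have := hA j hja hP; omega
    · exact not_B (by omega) j (by omega) (by omega) hP
  by_cases hka : k = a
  · refine ⟨0, a, by omega, fun j hj hP ↦ mem_Ico.mpr ⟨j.zero_le, ?_⟩⟩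
    by_contra hle
    by_cases hj : j < 2 * a
    · exact not_B hka.le j (by omega) hj hP
    · exact hk0 (hC j (by omega) ‹_› hP)
  · refine ⟨a, 2 * a, by omega, fun j hj hP ↦ mem_Ico.mpr ⟨?_, ?_⟩⟩
    · by_contra hlt; exact hka (hA j (by omega) hP)
    · by_contra hle; exact hk0 (hC j (by omega) ‹_› hP)

theorem stmt5_general (n : ℕ) (p r : Equiv.Perm (Fin n))
    (x : ℕ → Fin n) (hcyc : ∀ j, p (x j) = x (j + 1))
    (hsurj : ∀ y : Fin n, ∃ j < n, x j = y)
    (a : ℕ) (ha : a = n / 3)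
    (hr1 : ∀ j < a, r (x j) = x (j + a))
    (hr2 : ∀ j, a ≤ j → j < 2 * a → r (x j) = x (j - a))
    (hr3 : ∀ j, 2 * a ≤ j → j < n → r (x j) = x j)
    (q : Equiv.Perm (Fin n)) (hq : p * q = q * p) :
    2 * (a : ℝ) / n ≤ hdist q r := by
  have h3a : 3 * a ≤ n := ha ▸ Nat.mul_div_le n 3
  obtain ⟨k, hk, hxk⟩ := hsurj (q (x 0))
  have hqx := apply_orbit_of_commute hcyc hq hxk.symm
  have hmod {u v : ℕ} : x u = x v ↔ u ≡ v [MOD n] := orbit_eq_iff_modEq hcyc hsurj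
  have agree_A : ∀ j < a, q (x j) = r (x j) → k = a := fun j hj h ↦ by
    rw [hqx, hr1 j hj, hmod] at h
    exact (Nat.ModEq.add_left_cancel' j h).eq_of_lt_of_lt hk (by omega)
  have agree_B : ∀ j, a ≤ j → j < 2 * a → q (x j) = r (x j) → a + k ≡ 0 [MOD n] :=
    fun j hj₁ hj₂ h ↦ by
      rw [hqx, hr2 j hj₁ hj₂, hmod, show j + k = j - a + (a + k) by omega] at h
      exact Nat.ModEq.add_left_cancel' (j - a) h
  have agree_C : ∀ j, 2 * a ≤ j → j < n → q (x j) = r (x j) → k = 0 := fun j hj₁ hj₂ h ↦ by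
    rw [hqx, hr3 j hj₁ hj₂, hmod] at h
    exact (Nat.ModEq.add_left_cancel' j h).eq_of_lt_of_lt hk (by omega)
  obtain ⟨lo, hi, hlen, hagree⟩ := exists_Ico_of_blockwise_shift h3a agree_A agree_B agree_C
  have hcard : 2 * a ≤ #{i | q i ≠ r i} :=
    le_trans (by omega) (le_card_filter_ne (orbit_injOn hsurj) hagree)
  unfold hdist
  gcongr
  exact_mod_cast hcard

/-- if `p` is an `n`-cycle `x_0 ↦ x_1 ↦ ⋯` and `r` is the block-swapping
permutation built from `a = ⌊n/3⌋ ≥ 1`, then every `q` commuting with `p` satisfies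
`d_H(q, r) ≥ 2a/n`. -/
theorem stmt5 (n : ℕ) (hn : 1 ≤ n) (p r : Equiv.Perm (Fin n))
    (x : ℕ → Fin n) (hcyc : ∀ j, p (x j) = x (j + 1))
    (hsurj : ∀ y : Fin n, ∃ j < n, x j = y)
    (a : ℕ) (ha : a = n / 3) (ha1 : 1 ≤ a)
    (hr1 : ∀ j < a, r (x j) = x (j + a))
    (hr2 : ∀ j, a ≤ j → j < 2 * a → r (x j) = x (j - a))
    (hr3 : ∀ j, 2 * a ≤ j → j < n → r (x j) = x j)
    (q : Equiv.Perm (Fin n)) (hq : p * q = q * p) :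
    2 * (a : ℝ) / n ≤ hdist q r :=
  stmt5_general n p r x hcyc hsurj a ha hr1 hr2 hr3 q hq
end

section
/- Let n ≥ 1, let a ∈ S_n be the n-cycle i ↦ i+1 (mod n), and let ε > 0. Then the number of permutations y ∈ S_n with d_H(ay, ya) < ε is at most n^{⌊nε⌋+1}. -/
open Finset Equiv

section Stmt7Aux


variable {N : ℕ}

private lemma filter_lt_orderEmbOfFin {M k : ℕ} (s : Finset (Fin M)) (h : s.card = k) (r : Fin k) :
    (s.filter fun d => d < s.orderEmbOfFin h r).card = (r : ℕ) := by
  have he : s.filter (fun d => d < s.orderEmbOfFin h r)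
      = (Finset.Iio r).image (s.orderEmbOfFin h) := by
    ext a
    simp only [mem_filter, mem_image, mem_Iio]
    constructor
    · rintro ⟨ha, hlt⟩
      have : a ∈ Set.range (s.orderEmbOfFin h) := by
        rw [Finset.range_orderEmbOfFin]; exact ha
      obtain ⟨t, rfl⟩ := this
      exact ⟨t, (OrderEmbedding.lt_iff_lt _).mp hlt, rfl⟩
    · rintro ⟨t, ht, rfl⟩
      exact ⟨Finset.orderEmbOfFin_mem s h t, (OrderEmbedding.lt_iff_lt _).mpr ht⟩
  rw [he, Finset.card_image_of_injective _ (s.orderEmbOfFin h).injective, Fin.card_Iio]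

private lemma rank_apply {M k : ℕ} (s : Finset (Fin M)) (h : s.card = k) {x : Fin M} (hx : x ∈ s)
    (hlt : (s.filter fun d => d < x).card < k) :
    s.orderEmbOfFin h ⟨(s.filter fun d => d < x).card, hlt⟩ = x := by
  have : x ∈ Set.range (s.orderEmbOfFin h) := by rw [Finset.range_orderEmbOfFin]; exact hx
  obtain ⟨r, rfl⟩ := this
  congr 1
  ext
  simp [filter_lt_orderEmbOfFin s h r]

/-- the set of break points of `y`. -/
def Dset (y : Equiv.Perm (Fin (N+1))) : Finset (Fin (N+1)) :=
  Finset.univ.filter fun i => finRotate (N+1) (y i) ≠ y (finRotate (N+1) i)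

lemma mem_Dset {y : Equiv.Perm (Fin (N+1))} {i : Fin (N+1)} :
    i ∈ Dset y ↔ finRotate (N+1) (y i) ≠ y (finRotate (N+1) i) := by
  simp [Dset]

/-- the `j`-th break point (in increasing order). -/
noncomputable def brk (y : Equiv.Perm (Fin (N+1))) (j : ℕ) : Fin (N+1) :=
  if h : j < (Dset y).card then (Dset y).orderEmbOfFin rfl ⟨j, h⟩ else 0

/-- the encoding function. -/
noncomputable def F (y : Equiv.Perm (Fin (N+1))) : ℕ → Fin (N+1)
  | 0 => y 0
  | j+1 => if (Dset y).card = 0 then y 0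
           else y (finRotate (N+1) (brk y (min j ((Dset y).card - 1))))

/-- the set of "new values" of `y`. -/
def T (y : Equiv.Perm (Fin (N+1))) : Finset (Fin (N+1)) :=
  insert (y 0) ((Dset y).image fun d => y (finRotate (N+1) d))

lemma T_eq (y : Equiv.Perm (Fin (N+1))) {m : ℕ} (hk : (Dset y).card ≤ m) :
    T y = (Finset.univ : Finset (Fin (m+1))).image (fun j : Fin (m+1) => F y (j : ℕ)) := by
  apply Finset.Subset.antisymm
  · intro v hv
    rcases Finset.mem_insert.mp hv with h0 | him
    · exact Finset.mem_image.mpr ⟨0, Finset.mem_univ _, by simp [F, h0]⟩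
    · obtain ⟨d, hd, rfl⟩ := Finset.mem_image.mp him
      have : d ∈ Set.range ((Dset y).orderEmbOfFin rfl) := by
        rw [Finset.range_orderEmbOfFin]; exact hd
      obtain ⟨r, rfl⟩ := this
      have hrk : (r : ℕ) < (Dset y).card := r.isLt
      refine Finset.mem_image.mpr ⟨(⟨(r : ℕ) + 1, by omega⟩ : Fin (m+1)), Finset.mem_univ _, ?_⟩
      have hk0 : (Dset y).card ≠ 0 := by omega
      have hmin : min (r : ℕ) ((Dset y).card - 1) = (r : ℕ) := by omega
      simp only [F, hk0, if_false, hmin, brk, dif_pos hrk]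
  · intro v hv
    obtain ⟨j, _, rfl⟩ := Finset.mem_image.mp hv
    rcases hj : (j : ℕ) with _ | j'
    · simp [F, T]
    · by_cases hk0 : (Dset y).card = 0
      · simp [F, hk0, T]
      · have hlt : min j' ((Dset y).card - 1) < (Dset y).card := by omega
        have hmem : brk y (min j' ((Dset y).card - 1)) ∈ Dset y := by
          rw [brk, dif_pos hlt]; exact Finset.orderEmbOfFin_mem _ _ _
        simp only [F, hk0, if_false]
        exact Finset.mem_insert_of_mem (Finset.mem_image_of_mem _ hmem)

/-- break criterion. -/
lemma mem_Dset_iff_T (y : Equiv.Perm (Fin (N+1))) {i : Fin (N+1)} (hi : (i : ℕ) < N) :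
    i ∈ Dset y ↔ finRotate (N+1) (y i) ∈ T y := by
  constructor
  · intro hD
    set v := finRotate (N+1) (y i) with hv
    set j := y.symm v with hj
    have hyj : y j = v := y.apply_symm_apply v
    by_cases hj0 : j = 0
    · rw [hj0] at hyj
      exact Finset.mem_insert.mpr (Or.inl hyj.symm)
    · set j' := (finRotate (N+1)).symm j with hj'
      have haj' : finRotate (N+1) j' = j := (finRotate (N+1)).apply_symm_apply j
      by_cases hD' : j' ∈ Dset y
      · refine Finset.mem_insert_of_mem (Finset.mem_image.mpr ⟨j', hD', ?_⟩)
        rw [haj', hyj]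
      · exfalso
        have heq : finRotate (N+1) (y j') = y (finRotate (N+1) j') := not_not.mp
          (fun h => hD' (mem_Dset.mpr h))
        rw [haj', hyj, hv] at heq
        have : y j' = y i := (finRotate (N+1)).injective heq
        have : j' = i := y.injective this
        rw [this] at hD'
        exact hD' hD
  · intro hT
    by_contra hD
    have heq : finRotate (N+1) (y i) = y (finRotate (N+1) i) := not_not.mp
      (fun h => hD (mem_Dset.mpr h))
    rw [heq] at hT
    rcases Finset.mem_insert.mp hT with h0 | him
    · have : finRotate (N+1) i = 0 := y.injective h0
      have hlast : finRotate (N+1) (Fin.last N) = 0 := finRotate_last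
      have : i = Fin.last N := (finRotate (N+1)).injective (this.trans hlast.symm)
      rw [this] at hi
      simp [Fin.last] at hi
    · obtain ⟨d, hd, hde⟩ := Finset.mem_image.mp him
      have : d = i := (finRotate (N+1)).injective (y.injective hde)
      rw [this] at hd
      exact hD hd

lemma card_filter_lt_of_mem {y : Equiv.Perm (Fin (N+1))} {i : Fin (N+1)} (hD : i ∈ Dset y) :
    ((Dset y).filter fun d => d < i).card < (Dset y).card := by
  apply Finset.card_lt_card
  constructor
  · exact Finset.filter_subset _ _
  · intro hsub
    have := hsub hD
    simp at this

/-- value at a break. -/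
lemma F_break (y : Equiv.Perm (Fin (N+1))) {i : Fin (N+1)} (hD : i ∈ Dset y) :
    y (finRotate (N+1) i) = F y (((Dset y).filter fun d => d < i).card + 1) := by
  set r := ((Dset y).filter fun d => d < i).card with hr
  have hrk : r < (Dset y).card := card_filter_lt_of_mem hD
  have hk0 : (Dset y).card ≠ 0 := by omega
  have hmin : min r ((Dset y).card - 1) = r := by omega
  simp only [F, hk0, if_false, hmin, brk, dif_pos hrk]
  rw [rank_apply (Dset y) rfl hD hrk]

/-- number of breaks below `i`. -/
def cnt (y : Equiv.Perm (Fin (N+1))) (i : ℕ) : ℕ :=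
  ((Dset y).filter fun d : Fin (N+1) => (d : ℕ) < i).card

lemma cnt_zero (y : Equiv.Perm (Fin (N+1))) : cnt y 0 = 0 := by
  simp [cnt]

lemma filter_coe_eq (y : Equiv.Perm (Fin (N+1))) (x : Fin (N+1)) :
    ((Dset y).filter fun d => d < x) = (Dset y).filter fun d : Fin (N+1) => (d : ℕ) < (x : ℕ) := by
  apply Finset.filter_congr
  intro d _
  simp only [Fin.lt_def]

lemma cnt_succ (y : Equiv.Perm (Fin (N+1))) (i : ℕ) (hi : i < N + 1) :
    cnt y (i + 1) = cnt y i + (if (⟨i, hi⟩ : Fin (N+1)) ∈ Dset y then 1 else 0) := by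
  by_cases hmem : (⟨i, hi⟩ : Fin (N+1)) ∈ Dset y
  · rw [if_pos hmem]
    have : ((Dset y).filter fun d : Fin (N+1) => (d : ℕ) < i + 1)
        = insert (⟨i, hi⟩ : Fin (N+1)) ((Dset y).filter fun d : Fin (N+1) => (d : ℕ) < i) := by
      ext d
      simp only [Finset.mem_filter, Finset.mem_insert]
      constructor
      · rintro ⟨hd, hlt⟩
        rcases Nat.lt_succ_iff_lt_or_eq.mp hlt with h | h
        · exact Or.inr ⟨hd, h⟩
        · exact Or.inl (Fin.ext h)
      · rintro (rfl | ⟨hd, hlt⟩)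
        · exact ⟨hmem, Nat.lt_succ_self i⟩
        · exact ⟨hd, Nat.lt_succ_of_lt hlt⟩
    rw [cnt, this, Finset.card_insert_of_notMem (by simp), cnt]
  · rw [if_neg hmem, Nat.add_zero]
    have : ((Dset y).filter fun d : Fin (N+1) => (d : ℕ) < i + 1)
        = (Dset y).filter fun d : Fin (N+1) => (d : ℕ) < i := by
      ext d
      simp only [Finset.mem_filter, and_congr_right_iff]
      intro hd
      constructor
      · intro hlt
        rcases Nat.lt_succ_iff_lt_or_eq.mp hlt with h | h
        · exact h
        · exact absurd ((Fin.ext h : d = (⟨i, hi⟩ : Fin (N+1))) ▸ hd) hmem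
      · exact Nat.lt_succ_of_lt
    rw [cnt, this]; simp [cnt]

lemma main_inj {N m : ℕ} (y y₂ : Equiv.Perm (Fin (N+1)))
    (hk : (Dset y).card ≤ m) (hk₂ : (Dset y₂).card ≤ m)
    (hf : ∀ j : Fin (m+1), F y (j : ℕ) = F y₂ (j : ℕ)) : y = y₂ := by
  have hT : T y = T y₂ := by
    rw [T_eq y hk, T_eq y₂ hk₂]
    exact Finset.image_congr fun j _ => hf j
  have hF0 : y 0 = y₂ 0 := by
    have := hf ⟨0, Nat.succ_pos m⟩
    simpa [F] using this
  have key : ∀ i : ℕ, (h : i < N + 1) → y ⟨i, h⟩ = y₂ ⟨i, h⟩ ∧ cnt y i = cnt y₂ i := by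
    intro i
    induction i with
    | zero =>
      intro h
      refine ⟨?_, by rw [cnt_zero, cnt_zero]⟩
      have h0 : (⟨0, h⟩ : Fin (N+1)) = 0 := rfl
      rw [h0]; exact hF0
    | succ i ih =>
      intro h
      have hi : i < N + 1 := Nat.lt_of_succ_lt h
      obtain ⟨hy, hc⟩ := ih hi
      set x : Fin (N+1) := ⟨i, hi⟩ with hx
      have hiN : (x : ℕ) < N := by show i < N; omega
      have hrotx : finRotate (N+1) x = ⟨i+1, h⟩ := by
        rw [finRotate_succ_apply]
        apply Fin.ext
        rw [Fin.val_add_one_of_lt]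
        exact Fin.lt_iff_val_lt_val.mpr (by simpa using hiN)
      have hbrk : x ∈ Dset y ↔ x ∈ Dset y₂ := by
        rw [mem_Dset_iff_T y hiN, mem_Dset_iff_T y₂ hiN, hy, hT]
      by_cases hxD : x ∈ Dset y
      · have hxD₂ : x ∈ Dset y₂ := hbrk.mp hxD
        have hr : ((Dset y).filter fun d => d < x).card = cnt y i := by
          rw [filter_coe_eq]; rfl
        have hr₂ : ((Dset y₂).filter fun d => d < x).card = cnt y₂ i := by
          rw [filter_coe_eq]; rfl
        have hrlt : cnt y i < (Dset y).card := hr ▸ card_filter_lt_of_mem hxD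
        have hle : cnt y i + 1 ≤ m := by omega
        have hfe : F y (cnt y i + 1) = F y₂ (cnt y i + 1) := hf ⟨cnt y i + 1, by omega⟩
        have e1 : y (finRotate (N+1) x) = F y (cnt y i + 1) := by
          rw [F_break y hxD, hr]
        have e2 : y₂ (finRotate (N+1) x) = F y₂ (cnt y i + 1) := by
          rw [F_break y₂ hxD₂, hr₂, hc]
        constructor
        · rw [← hrotx, e1, e2, hfe]
        · rw [cnt_succ y i hi, cnt_succ y₂ i hi, if_pos hxD, if_pos hxD₂, hc]
      · have hxD₂ : x ∉ Dset y₂ := fun hh => hxD (hbrk.mpr hh)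
        have e1 : y (finRotate (N+1) x) = finRotate (N+1) (y x) :=
          (not_not.mp (fun hh => hxD (mem_Dset.mpr hh))).symm
        have e2 : y₂ (finRotate (N+1) x) = finRotate (N+1) (y₂ x) :=
          (not_not.mp (fun hh => hxD₂ (mem_Dset.mpr hh))).symm
        constructor
        · rw [← hrotx, e1, e2, hy]
        · rw [cnt_succ y i hi, cnt_succ y₂ i hi, if_neg hxD, if_neg hxD₂, hc]
  apply Equiv.ext
  intro x
  have := (key x.val x.isLt).1
  simpa using this

/-- the number of permutations `y ∈ S_n` almost commuting with the standard
`n`-cycle, i.e. with `d_H(ay, ya) < ε`, is at most `n^{⌊nε⌋+1}`. -/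
theorem stmt7 (n : ℕ) (hn : 1 ≤ n) (ε : ℝ) (hε : 0 < ε) :
    Nat.card {y : Equiv.Perm (Fin n) //
        hdist (finRotate n * y) (y * finRotate n) < ε}
      ≤ n ^ (⌊(n : ℝ) * ε⌋₊ + 1) := by
  obtain ⟨N, rfl⟩ : ∃ N, n = N + 1 := ⟨n - 1, by omega⟩
  set m : ℕ := ⌊((N + 1 : ℕ) : ℝ) * ε⌋₊ with hm
  have hkle : ∀ y : {y : Equiv.Perm (Fin (N+1)) //
      hdist (finRotate (N+1) * y) (y * finRotate (N+1)) < ε}, (Dset y.1).card ≤ m := by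
    rintro ⟨y, hy⟩
    have hDeq : (Finset.univ.filter fun i =>
        (finRotate (N+1) * y) i ≠ (y * finRotate (N+1)) i) = Dset y := by
      rfl
    rw [hdist, hDeq] at hy
    have hpos : (0 : ℝ) < ((N + 1 : ℕ) : ℝ) := by positivity
    rw [div_lt_iff₀ hpos] at hy
    have hle : (((Dset y).card : ℕ) : ℝ) ≤ ((N + 1 : ℕ) : ℝ) * ε := by
      rw [mul_comm]; exact le_of_lt hy
    exact Nat.le_floor hle
  set E : {y : Equiv.Perm (Fin (N+1)) //
      hdist (finRotate (N+1) * y) (y * finRotate (N+1)) < ε} → (Fin (m+1) → Fin (N+1)) :=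
    fun y j => F y.1 (j : ℕ) with hE
  have hinj : Function.Injective E := by
    intro y y₂ h
    apply Subtype.ext
    exact main_inj _ _ (hkle y) (hkle y₂) (fun j => congrFun h j)
  calc Nat.card {y : Equiv.Perm (Fin (N+1)) //
        hdist (finRotate (N+1) * y) (y * finRotate (N+1)) < ε}
      ≤ Nat.card (Fin (m+1) → Fin (N+1)) := Nat.card_le_card_of_injective E hinj
    _ = (N + 1) ^ (m + 1) := by simp [Nat.card_eq_fintype_card]
end Stmt7Aux
end
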